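/- arXiv:0911.4459 — 3 statements merged into one kernel-verified Lean document; each statement's English description precedes it below -/
import Mathlib

section
/- If G is a triangle-free graph with vertex set V that admits an interval t-coloring, then t ≤ |V| − 1. -/
open SimpleGraph

/-- `c` is an interval `t`-coloring of `G`: edges get colors in `{1,…,t}`, every color
`1,…,t` is used, adjacent edges get distinct colors, and the set of colors of edges
incident to any vertex is an interval of integers. -/
def IsIntervalColoring {V : Type*} (G : SimpleGraph V) (t : ℕ) (c : Sym2 V → ℕ) : Prop :=
  (∀ e ∈ G.edgeSet, 1 ≤ c e ∧ c e ≤ t) ∧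
  (∀ i, 1 ≤ i → i ≤ t → ∃ e ∈ G.edgeSet, c e = i) ∧
  (∀ v w₁ w₂, G.Adj v w₁ → G.Adj v w₂ → w₁ ≠ w₂ → c s(v, w₁) ≠ c s(v, w₂)) ∧
  (∀ v i j k, (∃ w, G.Adj v w ∧ c s(v, w) = i) → (∃ w, G.Adj v w ∧ c s(v, w) = k) →
    i ≤ j → j ≤ k → ∃ w, G.Adj v w ∧ c s(v, w) = j)

/-- `G` has an interval `t`-coloring. -/
def HasIntervalColoring {V : Type*} (G : SimpleGraph V) (t : ℕ) : Prop :=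
  ∃ c : Sym2 V → ℕ, IsIntervalColoring G t c

/-- `G` is interval colorable (`G ∈ 𝔑`). -/
def IntervalColorable {V : Type*} (G : SimpleGraph V) : Prop :=
  ∃ t : ℕ, 1 ≤ t ∧ HasIntervalColoring G t

/-- `w G`: the least number of colors in an interval coloring of `G`. -/
noncomputable def wNum {V : Type*} (G : SimpleGraph V) : ℕ :=
  sInf {t | HasIntervalColoring G t}

/-- `W G`: the greatest number of colors in an interval coloring of `G`. -/
noncomputable def WNum {V : Type*} (G : SimpleGraph V) : ℕ :=
  sSup {t | HasIntervalColoring G t}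

/-- `G` is `r`-regular: every vertex has exactly `r` neighbors. -/
def IsRegularGraph {V : Type*} (G : SimpleGraph V) (r : ℕ) : Prop :=
  ∀ v : V, (G.neighborSet v).ncard = r

/-- `c` is a proper edge coloring of `G` using colors `0,…,k-1`. -/
def IsProperEdgeColoring {V : Type*} (G : SimpleGraph V) (k : ℕ) (c : Sym2 V → ℕ) : Prop :=
  (∀ e ∈ G.edgeSet, c e < k) ∧
  (∀ v w₁ w₂, G.Adj v w₁ → G.Adj v w₂ → w₁ ≠ w₂ → c s(v, w₁) ≠ c s(v, w₂))

/-- The chromatic index `χ'(G)`. -/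
noncomputable def edgeChromaticNumber {V : Type*} (G : SimpleGraph V) : ℕ :=
  sInf {k | ∃ c : Sym2 V → ℕ, IsProperEdgeColoring G k c}

/-- `G` is 1-factorable: its edge set decomposes into perfect matchings. -/
def IsOneFactorable {V : Type*} (G : SimpleGraph V) : Prop :=
  ∃ (n : ℕ) (f : Fin n → SimpleGraph.Subgraph G),
    (∀ i, (f i).IsPerfectMatching) ∧
    (∀ e ∈ G.edgeSet, ∃! i, e ∈ (f i).edgeSet)

/-- The tensor (direct) product `G × H`. -/
def tensorProd {α β : Type*} (G : SimpleGraph α) (H : SimpleGraph β) :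
    SimpleGraph (α × β) where
  Adj p q := G.Adj p.1 q.1 ∧ H.Adj p.2 q.2
  symm := Std.Symm.mk fun p q ⟨h₁, h₂⟩ => ⟨h₁.symm, h₂.symm⟩
  loopless := Std.Irrefl.mk fun p h => G.loopless.irrefl p.1 h.1

/-- The strong tensor (semistrong) product `G ⊗ H`. -/
def strongTensorProd {α β : Type*} (G : SimpleGraph α) (H : SimpleGraph β) :
    SimpleGraph (α × β) where
  Adj p q := (G.Adj p.1 q.1 ∧ H.Adj p.2 q.2) ∨ (p.2 = q.2 ∧ G.Adj p.1 q.1)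
  symm := Std.Symm.mk fun p q h => by
    rcases h with ⟨h₁, h₂⟩ | ⟨h₁, h₂⟩
    · exact Or.inl ⟨h₁.symm, h₂.symm⟩
    · exact Or.inr ⟨h₁.symm, h₂.symm⟩
  loopless := Std.Irrefl.mk fun p h => by
    rcases h with ⟨h₁, _⟩ | ⟨_, h₁⟩ <;> exact G.loopless.irrefl p.1 h₁

/-- The strong product `G ⊠ H`. -/
def strongProd {α β : Type*} (G : SimpleGraph α) (H : SimpleGraph β) :
    SimpleGraph (α × β) where
  Adj p q := (G.Adj p.1 q.1 ∧ H.Adj p.2 q.2) ∨ (p.1 = q.1 ∧ H.Adj p.2 q.2) ∨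
    (p.2 = q.2 ∧ G.Adj p.1 q.1)
  symm := Std.Symm.mk fun p q h => by
    rcases h with ⟨h₁, h₂⟩ | ⟨h₁, h₂⟩ | ⟨h₁, h₂⟩
    · exact Or.inl ⟨h₁.symm, h₂.symm⟩
    · exact Or.inr (Or.inl ⟨h₁.symm, h₂.symm⟩)
    · exact Or.inr (Or.inr ⟨h₁.symm, h₂.symm⟩)
  loopless := Std.Irrefl.mk fun p h => by
    rcases h with ⟨h₁, _⟩ | ⟨_, h₂⟩ | ⟨_, h₁⟩
    · exact G.loopless.irrefl p.1 h₁
    · exact H.loopless.irrefl p.2 h₂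
    · exact G.loopless.irrefl p.1 h₁

/-- The lexicographic product (composition) `G[H]`. -/
def lexProd {α β : Type*} (G : SimpleGraph α) (H : SimpleGraph β) :
    SimpleGraph (α × β) where
  Adj p q := G.Adj p.1 q.1 ∨ (p.1 = q.1 ∧ H.Adj p.2 q.2)
  symm := Std.Symm.mk fun p q h => by
    rcases h with h₁ | ⟨h₁, h₂⟩
    · exact Or.inl h₁.symm
    · exact Or.inr ⟨h₁.symm, h₂.symm⟩
  loopless := Std.Irrefl.mk fun p h => by
    rcases h with h₁ | ⟨_, h₂⟩
    · exact G.loopless.irrefl p.1 h₁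
    · exact H.loopless.irrefl p.2 h₂

/-!
Start at a vertex `u` carrying color `b` and let `a` be the least color at `u`. Since the colors at
`u` form an interval, `u` and its neighbors along colors `a, …, b` are `b - a + 2` vertices. By
strong induction on `b`, a vertex `x` carrying color `a - 1` yields `a` vertices, each meeting a
color below `a`; if at most one of them, `x` itself, is a neighbor of `u`, this gives `b + 1`
vertices in all. Such an `x` is found among the neighbors of `u` (one whose least color is
smallest; triangle-freeness keeps its other neighbors away from those of `u`) or, if no neighbor
of `u` meets a color below `a`, anywhere, since every color is used.
-/

namespace SimpleGraph

variable {V : Type*}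

def colorsAt (G : SimpleGraph V) (c : Sym2 V → ℕ) (v : V) : Set ℕ :=
  {i | ∃ w, G.Adj v w ∧ c s(v, w) = i}

def neighborsUpTo (G : SimpleGraph V) (c : Sym2 V → ℕ) (u : V) (b : ℕ) : Set V :=
  {x | G.Adj u x ∧ c s(u, x) ≤ b}

def verticesBelow (G : SimpleGraph V) (c : Sym2 V → ℕ) (a : ℕ) : Set V :=
  {y | ∃ i ∈ G.colorsAt c y, i < a}

def descentSet (G : SimpleGraph V) (c : Sym2 V → ℕ) (u : V) (b a : ℕ) : Set V :=
  insert u (G.neighborsUpTo c u b ∪ G.verticesBelow c a)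

theorem descentSet_subset_verticesBelow {G : SimpleGraph V} {c : Sym2 V → ℕ} {x : V} {a b : ℕ}
    (ha : a ∈ G.colorsAt c x) (hab : a ≤ b) :
    G.descentSet c x b a ⊆ G.verticesBelow c (b + 1) := by
  rintro y (rfl | ⟨hxy, hyb⟩ | ⟨i, hi, hia⟩)
  · exact ⟨a, ha, by omega⟩
  · exact ⟨c s(x, y), ⟨x, hxy.symm, by rw [Sym2.eq_swap]⟩, by omega⟩
  · exact ⟨i, hi, by omega⟩

end SimpleGraph

namespace IsIntervalColoring

variable {V : Type*} {G : SimpleGraph V} {t : ℕ} {c : Sym2 V → ℕ}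

theorem mem_Icc_of_mem_colorsAt (hc : IsIntervalColoring G t c) {v : V} {i : ℕ}
    (hi : i ∈ G.colorsAt c v) : i ∈ Set.Icc 1 t := by
  obtain ⟨w, hw, rfl⟩ := hi
  exact hc.1 _ (G.mem_edgeSet.2 hw)

theorem exists_mem_colorsAt (hc : IsIntervalColoring G t c) {i : ℕ} (hi : i ∈ Set.Icc 1 t) :
    ∃ v, i ∈ G.colorsAt c v := by
  obtain ⟨e, he, rfl⟩ := hc.2.1 i hi.1 hi.2
  induction e using Sym2.ind with
  | _ v w => exact ⟨v, w, he, rfl⟩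

theorem ordConnected_colorsAt (hc : IsIntervalColoring G t c) (v : V) :
    (G.colorsAt c v).OrdConnected :=
  ⟨fun _ hi _ hk _ hj => hc.2.2.2 v _ _ _ hi hk hj.1 hj.2⟩

theorem ncard_neighborsUpTo (hc : IsIntervalColoring G t c) {u : V} {a b : ℕ}
    (ha : IsLeast (G.colorsAt c u) a) (hb : b ∈ G.colorsAt c u) :
    (G.neighborsUpTo c u b).ncard = b + 1 - a := by
  rw [← Set.ncard_Icc_nat]
  refine Set.BijOn.ncard_eq (f := fun x => c s(u, x)) ⟨?_, ?_, ?_⟩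
  · exact fun x hx => ⟨ha.2 ⟨x, hx.1, rfl⟩, hx.2⟩
  · intro x₁ hx₁ x₂ hx₂ hcol
    by_contra hne
    exact hc.2.2.1 u x₁ x₂ hx₁.1 hx₂.1 hne hcol
  · intro j hj
    obtain ⟨w, hw, hcw⟩ := (hc.ordConnected_colorsAt u).out ha.1 hb hj
    exact ⟨w, ⟨hw, hcw ▸ hj.2⟩, hcw⟩

theorem exists_descentSet_inter_subset (hc : IsIntervalColoring G t c) (hG : G.CliqueFree 3)
    {u : V} {a : ℕ} (ha : IsLeast (G.colorsAt c u) (a + 1)) (ha0 : 0 < a) :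
    ∃ x a', a ∈ G.colorsAt c x ∧ IsLeast (G.colorsAt c x) a' ∧
      G.neighborSet u ∩ G.descentSet c x a a' ⊆ {x} := by
  obtain ⟨w, huw, -⟩ := ha.1
  set s := {i | ∃ y, G.Adj u y ∧ i ∈ G.colorsAt c y}
  have hs : s.Nonempty := ⟨_, w, huw, u, huw.symm, rfl⟩
  obtain ⟨⟨x, hux, hx⟩, hmin⟩ := isLeast_csInf hs
  have hmin' : ∀ y, G.Adj u y → ∀ i ∈ G.colorsAt c y, sInf s ≤ i :=
    fun y huy i hi => hmin ⟨y, huy, hi⟩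
  by_cases hdescent : sInf s ≤ a
  · have hxu : c s(x, u) ∈ G.colorsAt c x := ⟨u, hux.symm, rfl⟩
    have hax : a + 1 ≤ c s(x, u) := by
      rw [Sym2.eq_swap]
      exact ha.2 ⟨x, hux, rfl⟩
    refine ⟨x, sInf s, (hc.ordConnected_colorsAt x).out hx hxu ⟨hdescent, by omega⟩,
      ⟨hx, hmin' x hux⟩, ?_⟩
    rintro y ⟨huy, rfl | ⟨hxy, -⟩ | ⟨i, hi, his⟩⟩
    · rfl
    · classical
      exact (hG {u, x, y} (is3Clique_triple_iff.2 ⟨hux, huy, hxy⟩)).elim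
    · exact absurd (hmin' y huy i hi) (not_le.2 his)
  · have hat : a ≤ t := by
      have := (hc.mem_Icc_of_mem_colorsAt ha.1).2
      omega
    obtain ⟨x, hx⟩ := hc.exists_mem_colorsAt ⟨ha0, hat⟩
    obtain ⟨a', ha'⟩ : ∃ a', IsLeast (G.colorsAt c x) a' := ⟨_, isLeast_csInf ⟨a, hx⟩⟩
    refine ⟨x, a', hx, ha', ?_⟩
    rintro y ⟨huy, hy⟩
    obtain ⟨i, hi, hia⟩ := descentSet_subset_verticesBelow ha'.1 (ha'.2 hx) hy
    exact absurd (hmin' y huy i hi) (by omega)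

theorem le_ncard_descentSet [Finite V] (hc : IsIntervalColoring G t c) (hG : G.CliqueFree 3)
    {b : ℕ} : ∀ {u : V} {a : ℕ}, b ∈ G.colorsAt c u → IsLeast (G.colorsAt c u) a →
      b + 1 ≤ (G.descentSet c u b a).ncard := by
  induction b using Nat.strong_induction_on with
  | _ b ih =>
  intro u a hb ha
  have hT := hc.ncard_neighborsUpTo ha hb
  have hab : a ≤ b := ha.2 hb
  have hu : u ∉ G.neighborsUpTo c u b ∪ G.verticesBelow c a := by
    rintro (⟨huu, -⟩ | ⟨i, hi, hia⟩)
    · exact huu.ne rfl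
    · exact (ha.2 hi).not_gt hia
  rw [descentSet, Set.ncard_insert_of_notMem hu]
  obtain ⟨a, rfl⟩ : ∃ a', a = a' + 1 :=
    ⟨a - 1, by have := (hc.mem_Icc_of_mem_colorsAt ha.1).1; omega⟩
  rcases Nat.eq_zero_or_pos a with rfl | ha0
  · have := Set.ncard_le_ncard
      (Set.subset_union_left : G.neighborsUpTo c u b ⊆ _ ∪ G.verticesBelow c (0 + 1))
    omega
  obtain ⟨x, a', hx, hx', hxu⟩ := hc.exists_descentSet_inter_subset hG ha ha0
  set T := G.neighborsUpTo c u b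
  set K := G.descentSet c x a a'
  have hK : a + 1 ≤ K.ncard := ih a (by omega) hx hx'
  have hTK : (T ∩ K).ncard ≤ 1 := by
    have hsub : T ∩ K ⊆ {x} := fun y hy => hxu ⟨hy.1.1, hy.2⟩
    simpa using Set.ncard_le_ncard hsub
  calc b + 1 ≤ T.ncard + K.ncard - (T ∩ K).ncard + 1 := by omega
    _ = (T ∪ K).ncard + 1 := by rw [← Set.ncard_union_add_ncard_inter T K]; omega
    _ ≤ (T ∪ G.verticesBelow c (a + 1)).ncard + 1 := by
      gcongr
      · exact Set.toFinite _
      · exact descentSet_subset_verticesBelow hx'.1 (hx'.2 hx)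

end IsIntervalColoring

/-- If a triangle-free graph `G` admits an interval `t`-coloring, then `t ≤ |V| - 1`. -/
theorem interval_coloring_triangle_free_bound {V : Type*} [Fintype V]
    (G : SimpleGraph V) (hG : G.CliqueFree 3) (t : ℕ)
    (h : HasIntervalColoring G t) : t ≤ Fintype.card V - 1 := by
  obtain ⟨c, hc⟩ := h
  rcases Nat.eq_zero_or_pos t with rfl | ht
  · exact Nat.zero_le _
  obtain ⟨u, hu⟩ := hc.exists_mem_colorsAt ⟨ht, le_rfl⟩
  obtain ⟨a, ha⟩ : ∃ a, IsLeast (G.colorsAt c u) a := ⟨_, isLeast_csInf ⟨t, hu⟩⟩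
  have hcount := hc.le_ncard_descentSet hG hu ha
  have hcard := (G.descentSet c u t a).ncard_le_card
  rw [Nat.card_eq_fintype_card] at hcard
  omega
end

section
/- If G admits an interval coloring, then for every positive integer n the lexicographic product G[nK_1] (replacing each vertex of G by n independent vertices) admits an interval coloring; moreover w(G[nK_1]) ≤ w(G)·n and W(G[nK_1]) ≥ (W(G)+1)·n − 1. -/
open SimpleGraph

/-! Replace each color `k` of an interval `t`-coloring of `G` by the block of `n` colors
`(k - 1) n + 1, …, k n`, and color the edge `(u, i)(v, j)` inside the block of `c(uv)` according to
a symmetric pattern `D(i, j)` whose `i`-th row is a bijection onto `[a i, a i + n)`. At the vertex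
`(u, i)` the colors are then the blocks of the colors at `u`, all shifted by `a i`: distinct, and an
interval because the colors at `u` are. The pattern `(i + j) mod n` (`a = 0`) uses `t n` colors;
the pattern `i + j` (`a i = i`) uses `(t + 1) n - 1`. -/

theorem Nat.le_of_mul_add_le_mul_add {n k k' r r' : ℕ} (hr' : r' < n)
    (h : k * n + r ≤ k' * n + r') : k ≤ k' := by
  by_contra! hlt
  have : (k' + 1) * n ≤ k * n := Nat.mul_le_mul_right n hlt
  rw [Nat.succ_mul] at this
  omega

theorem lexProd_bot_adj {α : Type*} (G : SimpleGraph α) {n : ℕ} {p q : α × Fin n} :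
    (lexProd G (⊥ : SimpleGraph (Fin n))).Adj p q ↔ G.Adj p.1 q.1 :=
  ⟨fun h => h.elim id fun h => h.2.elim, Or.inl⟩

theorem bddAbove_setOf_hasIntervalColoring {V : Type*} [Finite V] (G : SimpleGraph V) :
    BddAbove {t | HasIntervalColoring G t} := by
  refine ⟨Nat.card (Sym2 V), fun t ⟨c, _, hused, _⟩ => ?_⟩
  have hsub : Set.Icc 1 t ⊆ c '' G.edgeSet := fun i hi => hused i hi.1 hi.2
  calc t = (Set.Icc 1 t).ncard := by simp
    _ ≤ (c '' G.edgeSet).ncard := Set.ncard_le_ncard hsub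
    _ ≤ G.edgeSet.ncard := Set.ncard_image_le
    _ ≤ Nat.card (Sym2 V) := Set.ncard_le_card _

def blowUpColoring {α : Type*} (c : Sym2 α → ℕ) (n : ℕ) (D : Sym2 (Fin n) → ℕ) :
    Sym2 (α × Fin n) → ℕ :=
  fun e => (c (e.map Prod.fst) - 1) * n + D (e.map Prod.snd) + 1

section

variable {α : Type*} {G : SimpleGraph α} {t n : ℕ} {c : Sym2 α → ℕ} {D : Sym2 (Fin n) → ℕ}
  {a : Fin n → ℕ} {σ : Fin n → Equiv.Perm (Fin n)}

theorem blowUpColoring_mk (p q : α × Fin n) :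
    blowUpColoring c n D s(p, q) = (c s(p.1, q.1) - 1) * n + D s(p.2, q.2) + 1 :=
  rfl

theorem exists_adj_blowUpColoring_eq (hD : ∀ i j, D s(i, j) = a i + σ i j) {u v : α} {k r : ℕ}
    (huv : G.Adj u v) (hk : c s(u, v) = k + 1) (i : Fin n) (hr : r < n) :
    ∃ q, (lexProd G ⊥).Adj (u, i) q ∧
      blowUpColoring c n D s((u, i), q) = k * n + a i + r + 1 := by
  refine ⟨(v, (σ i).symm ⟨r, hr⟩), Or.inl huv, ?_⟩
  rw [blowUpColoring_mk, hD, hk, Equiv.apply_symm_apply]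
  simp only [add_tsub_cancel_right, add_assoc]

theorem blowUpColoring_ne_of_ne (hc : IsIntervalColoring G t c)
    (hD : ∀ i j, D s(i, j) = a i + σ i j)
    {p q q' : α × Fin n} (hq : G.Adj p.1 q.1) (hq' : G.Adj p.1 q'.1) (hne : q ≠ q') :
    blowUpColoring c n D s(p, q) ≠ blowUpColoring c n D s(p, q') := by
  intro h
  rw [blowUpColoring_mk, blowUpColoring_mk, hD, hD] at h
  have hk := (hc.1 _ (G.mem_edgeSet.2 hq)).1
  have hk' := (hc.1 _ (G.mem_edgeSet.2 hq')).1
  by_cases hv : q.1 = q'.1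
  · rw [hv] at h
    have hσ : σ p.2 q.2 = σ p.2 q'.2 := Fin.ext (by omega)
    exact hne (Prod.ext hv ((σ p.2).injective hσ))
  · refine hc.2.2.1 p.1 q.1 q'.1 hq hq' hv ?_
    have hle := Nat.le_of_mul_add_le_mul_add (σ p.2 q'.2).isLt
      (k := c s(p.1, q.1) - 1) (k' := c s(p.1, q'.1) - 1) (r := σ p.2 q.2) (by omega)
    have hge := Nat.le_of_mul_add_le_mul_add (σ p.2 q.2).isLt
      (k := c s(p.1, q'.1) - 1) (k' := c s(p.1, q.1) - 1) (r := σ p.2 q'.2) (by omega)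
    omega

theorem exists_adj_blowUpColoring_eq_of_le_of_le (hc : IsIntervalColoring G t c)
    (hD : ∀ i j, D s(i, j) = a i + σ i j) (p : α × Fin n) {x y z : ℕ}
    (hx : ∃ w, (lexProd G ⊥).Adj p w ∧ blowUpColoring c n D s(p, w) = x)
    (hz : ∃ w, (lexProd G ⊥).Adj p w ∧ blowUpColoring c n D s(p, w) = z)
    (hxy : x ≤ y) (hyz : y ≤ z) :
    ∃ w, (lexProd G ⊥).Adj p w ∧ blowUpColoring c n D s(p, w) = y := by
  obtain ⟨u, i⟩ := p
  obtain ⟨w₁, hw₁, rfl⟩ := hx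
  obtain ⟨w₂, hw₂, rfl⟩ := hz
  rw [lexProd_bot_adj] at hw₁ hw₂
  dsimp only at hw₁ hw₂
  rw [blowUpColoring_mk, hD] at hxy hyz
  dsimp only at hxy hyz
  have hk₁ := (hc.1 _ (G.mem_edgeSet.2 hw₁)).1
  have hk₂ := (hc.1 _ (G.mem_edgeSet.2 hw₂)).1
  have hn := i.pos
  obtain ⟨K, r, hr, rfl⟩ : ∃ K r, r < n ∧ y = K * n + a i + r + 1 :=
    ⟨(y - a i - 1) / n, (y - a i - 1) % n, Nat.mod_lt _ hn,
      by have := Nat.div_add_mod' (y - a i - 1) n; omega⟩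
  have hK₁ : c s(u, w₁.1) - 1 ≤ K :=
    Nat.le_of_mul_add_le_mul_add hr (r := σ i w₁.2) (by omega)
  have hK₂ : K ≤ c s(u, w₂.1) - 1 :=
    Nat.le_of_mul_add_le_mul_add (σ i w₂.2).isLt (r := r) (by omega)
  obtain ⟨v, huv, hcv⟩ :=
    hc.2.2.2 u _ (K + 1) _ ⟨_, hw₁, rfl⟩ ⟨_, hw₂, rfl⟩ (by omega) (by omega)
  exact exists_adj_blowUpColoring_eq hD huv hcv i hr

theorem IsIntervalColoring.blowUpColoring {t' : ℕ} (hc : IsIntervalColoring G t c)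
    (hD : ∀ i j, D s(i, j) = a i + σ i j)
    (hbound : ∀ k < t, ∀ i j, k * n + D s(i, j) < t')
    (hcover : ∀ m < t', ∃ k < t, ∃ i, ∃ r < n, m = k * n + a i + r) :
    IsIntervalColoring (lexProd G ⊥) t' (blowUpColoring c n D) := by
  refine ⟨fun e he => ?_, fun m hm₁ hm₂ => ?_, fun p q q' hq hq' hne => ?_,
    exists_adj_blowUpColoring_eq_of_le_of_le hc hD⟩
  · obtain ⟨p, q⟩ := e
    rw [mem_edgeSet, lexProd_bot_adj] at he
    have hk := hc.1 _ (G.mem_edgeSet.2 he)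
    have := hbound (c s(p.1, q.1) - 1) (by omega) p.2 q.2
    rw [blowUpColoring_mk]
    omega
  · obtain ⟨k, hk, i, r, hr, hm⟩ := hcover (m - 1) (by omega)
    obtain ⟨⟨u, v⟩, he, hce⟩ := hc.2.1 (k + 1) (by omega) hk
    obtain ⟨q, hq, hcq⟩ := exists_adj_blowUpColoring_eq hD he hce i hr
    exact ⟨_, hq, hcq.trans (by omega)⟩
  · exact blowUpColoring_ne_of_ne hc hD ((lexProd_bot_adj G).1 hq) ((lexProd_bot_adj G).1 hq') hne

end

section

variable {α : Type*} {G : SimpleGraph α} {t n : ℕ}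

theorem HasIntervalColoring.lexProd_bot_mul [NeZero n] (h : HasIntervalColoring G t) :
    HasIntervalColoring (lexProd G (⊥ : SimpleGraph (Fin n))) (t * n) := by
  obtain ⟨c, hc⟩ := h
  refine ⟨_, hc.blowUpColoring
    (D := Sym2.lift ⟨fun i j => (i + j : Fin n), fun i j => by simp only [add_comm]⟩)
    (a := 0) (σ := Equiv.addLeft) (fun i j => (zero_add _).symm) ?_ ?_⟩
  · intro k hk i j
    have hkt : k * n + n ≤ t * n := by simpa [Nat.succ_mul] using Nat.mul_le_mul_right n hk
    have := (i + j).isLt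
    show k * n + (i + j : Fin n) < t * n
    omega
  · intro m hm
    refine ⟨m / n, Nat.div_lt_of_lt_mul (by rwa [mul_comm]), 0, m % n,
      Nat.mod_lt _ (NeZero.pos n), ?_⟩
    simp only [Pi.zero_apply, add_zero, Nat.div_add_mod']

theorem HasIntervalColoring.lexProd_bot_succ_mul_sub_one (h : HasIntervalColoring G t)
    (ht : 1 ≤ t) :
    HasIntervalColoring (lexProd G (⊥ : SimpleGraph (Fin n))) ((t + 1) * n - 1) := by
  obtain ⟨c, hc⟩ := h
  have htn : (t + 1) * n = t * n + n := add_one_mul t n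
  have htn' : (t - 1) * n + n = t * n := by rw [← add_one_mul, Nat.sub_add_cancel ht]
  refine ⟨_, hc.blowUpColoring
    (D := Sym2.lift ⟨fun i j => (i : ℕ) + j, fun i j => add_comm _ _⟩)
    (a := Fin.val) (σ := 1) (fun i j => rfl) ?_ ?_⟩
  · intro k hk i j
    have hkt : k * n + n ≤ t * n := by simpa [Nat.succ_mul] using Nat.mul_le_mul_right n hk
    have := i.isLt
    have := j.isLt
    show k * n + (i + j) < (t + 1) * n - 1
    omega
  · intro m hm
    have hn : 0 < n := Nat.pos_of_ne_zero (by rintro rfl; simp at hm)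
    by_cases hmt : m < t * n
    · refine ⟨m / n, Nat.div_lt_of_lt_mul (by rwa [mul_comm]), ⟨0, hn⟩, m % n,
        Nat.mod_lt _ hn, ?_⟩
      simp only [add_zero, Nat.div_add_mod']
    · exact ⟨t - 1, by omega, ⟨n - 1, by omega⟩, m + 1 - t * n, by omega, by simp only; omega⟩

end

/-- If `G ∈ 𝔑`, then `G[nK₁] ∈ 𝔑` for any `n ≥ 1`; moreover
`w(G[nK₁]) ≤ w(G)·n` and `W(G[nK₁]) ≥ (W(G)+1)·n - 1`. -/
theorem lexProd_empty_interval_colorable {α : Type*} [Fintype α]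
    (G : SimpleGraph α) (hG : IntervalColorable G) (n : ℕ) (hn : 1 ≤ n) :
    IntervalColorable (lexProd G (⊥ : SimpleGraph (Fin n))) ∧
    wNum (lexProd G (⊥ : SimpleGraph (Fin n))) ≤ wNum G * n ∧
    WNum (lexProd G (⊥ : SimpleGraph (Fin n))) ≥ (WNum G + 1) * n - 1 := by
  obtain ⟨t, ht, hGt⟩ := hG
  have : NeZero n := NeZero.of_pos hn
  have hne : {t | HasIntervalColoring G t}.Nonempty := ⟨t, hGt⟩
  have hbdd := bddAbove_setOf_hasIntervalColoring G
  have hW : 1 ≤ WNum G := ht.trans (le_csSup hbdd hGt)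
  refine ⟨⟨t * n, Nat.mul_le_mul ht hn, hGt.lexProd_bot_mul⟩, ?_, ?_⟩
  · exact Nat.sInf_le (Nat.sInf_mem hne).lexProd_bot_mul
  · exact le_csSup (bddAbove_setOf_hasIntervalColoring _)
      ((Nat.sSup_mem hne hbdd).lexProd_bot_succ_mul_sub_one hW)
end

section
/- If G is a 1-factorable graph and H is a regular graph, then the tensor product G × H is 1-factorable. -/
open SimpleGraph

/-!
Write each perfect matching of `G` as a fixed-point-free involution `σᵢ`, and orient its edges
from the smaller end under an arbitrary linear order of `V(G)`. By König's theorem (Hall's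
theorem for the `r`-biregular bipartite double of `H`) the arcs of `H` split into `r`
permutations `πⱼ`. For each pair `(i, j)`, the map sending `(u, v)` to `(σᵢ u, πⱼ v)` if `u`
precedes `σᵢ u` and to `(σᵢ u, πⱼ⁻¹ v)` otherwise is an involution of `G × H` along its edges,
i.e. a perfect matching, and every edge of `G × H` lies in exactly one of these `n r` matchings.
-/

open Finset Function

def IsRelDecomposition {β ι : Type*} (R : β → β → Prop) (f : ι → β → β) : Prop :=
  (∀ i v, R v (f i v)) ∧ ∀ v w, R v w → ∃! i, f i v = w

theorem IsRelDecomposition.fin_cons {β : Type*} {R : β → β → Prop} {n : ℕ} {f : β → β}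
    {g : Fin n → β → β} (hf : ∀ v, R v (f v))
    (hg : IsRelDecomposition (fun v w => R v w ∧ f v ≠ w) g) :
    IsRelDecomposition R (Fin.cons f g : Fin (n + 1) → β → β) := by
  refine ⟨Fin.cases hf fun i v => (hg.1 i v).1, fun v w hvw => ?_⟩
  by_cases hw : f v = w
  · refine ⟨0, hw, Fin.cases (fun _ => rfl) fun i hi => ?_⟩
    exact absurd (hw.trans hi.symm) (hg.1 i v).2
  · obtain ⟨i, hi, hi'⟩ := hg.2 v w ⟨hvw, hw⟩
    refine ⟨i.succ, hi, Fin.cases (fun h => absurd h hw) fun j hj => ?_⟩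
    exact congrArg Fin.succ (hi' j hj)

section PermDecomposition

variable {β : Type*} [Fintype β] [DecidableEq β] {R : β → β → Prop} [DecidableRel R]

theorem exists_perm_forall_rel_of_biregular {r : ℕ} (hr : 0 < r)
    (hrow : ∀ v, #(univ.bipartiteAbove R v) = r) (hcol : ∀ w, #(univ.bipartiteBelow R w) = r) :
    ∃ π : Equiv.Perm β, ∀ v, R v (π v) := by
  -- Hall's condition, by double counting the pairs of `R` between `S` and its neighbourhood
  have hall : ∀ S : Finset β, #S ≤ #(S.biUnion fun v => univ.bipartiteAbove R v) := fun S => by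
    refine Nat.le_of_mul_le_mul_right (card_mul_le_card_mul R (fun v hv => ?_) fun w _ => ?_) hr
    · refine (hrow v).ge.trans (card_le_card fun w hw => ?_)
      exact (mem_bipartiteAbove R).2 ⟨mem_biUnion.2 ⟨v, hv, hw⟩, ((mem_bipartiteAbove R).1 hw).2⟩
    · exact (hcol w).le.trans' (card_le_card (filter_subset_filter _ (subset_univ S)))
  obtain ⟨f, hinj, hf⟩ := (all_card_le_biUnion_card_iff_exists_injective _).1 hall
  exact ⟨Equiv.ofBijective f (Finite.injective_iff_bijective.1 hinj),
    fun v => ((mem_bipartiteAbove R).1 (hf v)).2⟩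

theorem exists_perm_decomposition_of_biregular {r : ℕ}
    (hrow : ∀ v, #(univ.bipartiteAbove R v) = r) (hcol : ∀ w, #(univ.bipartiteBelow R w) = r) :
    ∃ π : Fin r → Equiv.Perm β, IsRelDecomposition R (fun j => π j) := by
  induction r generalizing R with
  | zero =>
    refine ⟨finZeroElim, finZeroElim, fun v w hvw => ?_⟩
    have : w ∈ univ.bipartiteAbove R v := (mem_bipartiteAbove R).2 ⟨mem_univ w, hvw⟩
    simp [card_eq_zero.1 (hrow v)] at this
  | succ r ih =>
    obtain ⟨π, hπ⟩ := exists_perm_forall_rel_of_biregular r.succ_pos hrow hcol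
    have hrow' : ∀ v, #(univ.bipartiteAbove (fun v w => R v w ∧ π v ≠ w) v) = r := fun v => by
      have : univ.bipartiteAbove (fun v w => R v w ∧ π v ≠ w) v
          = (univ.bipartiteAbove R v).erase (π v) := by
        ext w; simp [bipartiteAbove, and_comm, eq_comm]
      rw [this, card_erase_of_mem ((mem_bipartiteAbove R).2 ⟨mem_univ _, hπ v⟩), hrow,
        Nat.add_sub_cancel]
    have hcol' : ∀ w, #(univ.bipartiteBelow (fun v w => R v w ∧ π v ≠ w) w) = r := fun w => by
      have : univ.bipartiteBelow (fun v w => R v w ∧ π v ≠ w) w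
          = (univ.bipartiteBelow R w).erase (π.symm w) := by
        ext v; simp [bipartiteBelow, and_comm, Equiv.eq_symm_apply]
      have hmem : π.symm w ∈ univ.bipartiteBelow R w :=
        (mem_bipartiteBelow R).2 ⟨mem_univ _, by simpa using hπ (π.symm w)⟩
      rw [this, card_erase_of_mem hmem, hcol, Nat.add_sub_cancel]
    obtain ⟨g, hg⟩ := ih hrow' hcol'
    refine ⟨Fin.cons π g, ?_⟩
    convert hg.fin_cons hπ using 1
    ext j : 1
    cases j using Fin.cases <;> simp

end PermDecomposition

theorem IsRegularGraph.exists_perm_decomposition {β : Type*} [Fintype β] {H : SimpleGraph β}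
    {r : ℕ} (hH : IsRegularGraph H r) :
    ∃ π : Fin r → Equiv.Perm β, IsRelDecomposition H.Adj (fun j => π j) := by
  classical
  have hrow : ∀ v, #(univ.bipartiteAbove H.Adj v) = r := fun v => by
    rw [← hH v, ← Set.ncard_coe_finset]; congr 1; ext; simp [bipartiteAbove]
  refine exists_perm_decomposition_of_biregular hrow fun w => ?_
  rw [← hrow w]; congr 1; ext; simp [bipartiteAbove, bipartiteBelow, H.adj_comm]

theorem SimpleGraph.Subgraph.IsPerfectMatching.exists_involutive {V : Type*} {G : SimpleGraph V}
    {M : G.Subgraph} (hM : M.IsPerfectMatching) :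
    ∃ σ : V → V, Involutive σ ∧ ∀ v w, M.Adj v w ↔ σ v = w := by
  choose σ hσ using Subgraph.isPerfectMatching_iff.1 hM
  have hσM : ∀ v w, M.Adj v w ↔ σ v = w :=
    fun v w => ⟨fun h => ((hσ v).2 w h).symm, fun h => h ▸ (hσ v).1⟩
  exact ⟨σ, fun v => (hσM _ _).1 ((hσM _ _).2 rfl).symm, hσM⟩

theorem IsOneFactorable.exists_involutive_decomposition {V : Type*} {G : SimpleGraph V}
    (hG : IsOneFactorable G) :
    ∃ (n : ℕ) (σ : Fin n → V → V), (∀ i, Involutive (σ i)) ∧ IsRelDecomposition G.Adj σ := by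
  obtain ⟨n, F, hF, hcov⟩ := hG
  choose σ hσ hσF using fun i => (hF i).exists_involutive
  refine ⟨n, σ, hσ, fun i v => (F i).adj_sub ((hσF i v _).2 rfl), fun v w hvw => ?_⟩
  simpa only [Subgraph.mem_edgeSet, hσF] using hcov s(v, w) hvw

def SimpleGraph.involutionSubgraph {V : Type*} (G : SimpleGraph V) (σ : V → V)
    (hσ : Involutive σ) (hadj : ∀ v, G.Adj v (σ v)) : G.Subgraph where
  verts := Set.univ
  Adj v w := σ v = w
  adj_sub h := h ▸ hadj _
  edge_vert _ := trivial
  symm := ⟨fun v _ h => h ▸ hσ v⟩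

theorem SimpleGraph.isPerfectMatching_involutionSubgraph {V : Type*} (G : SimpleGraph V)
    (σ : V → V) (hσ : Involutive σ) (hadj : ∀ v, G.Adj v (σ v)) :
    (G.involutionSubgraph σ hσ hadj).IsPerfectMatching :=
  Subgraph.isPerfectMatching_iff.2 fun v => ⟨σ v, rfl, fun _ h => Eq.symm h⟩

theorem isOneFactorable_of_involutive_decomposition {V ι : Type*} [Fintype ι]
    {G : SimpleGraph V} (σ : ι → V → V) (hσ : ∀ i, Involutive (σ i))
    (hdec : IsRelDecomposition G.Adj σ) : IsOneFactorable G := by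
  let e := Fintype.equivFin ι
  refine ⟨_, fun k => G.involutionSubgraph (σ (e.symm k)) (hσ _) (hdec.1 _),
    fun k => G.isPerfectMatching_involutionSubgraph _ _ _, fun x hx => ?_⟩
  induction x using Sym2.ind with
  | _ v w => exact e.existsUnique_congr_left.1 (hdec.2 v w hx)

section TensorProduct

variable {α β : Type*} [LinearOrder α]

def tensorInvolution (σ : α → α) (π : Equiv.Perm β) (p : α × β) : α × β :=
  (σ p.1, if p.1 < σ p.1 then π p.2 else π.symm p.2)

theorem tensorInvolution_eq_iff {σ : α → α} {π : Equiv.Perm β} {u u' : α} {v v' : β} :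
    tensorInvolution σ π (u, v) = (u', v') ↔
      σ u = u' ∧ if u < u' then π v = v' else π v' = v := by
  simp only [tensorInvolution, Prod.mk.injEq]
  constructor <;> rintro ⟨rfl, h⟩ <;> refine ⟨rfl, ?_⟩ <;> split_ifs at h ⊢ <;>
    simp_all [eq_comm]

theorem tensorInvolution_involutive {σ : α → α} (hσ : Involutive σ) (hne : ∀ u, σ u ≠ u)
    (π : Equiv.Perm β) : Involutive (tensorInvolution σ π) := by
  rintro ⟨u, v⟩
  have hlt : σ u < u ↔ ¬ u < σ u := ⟨fun h => h.not_gt, fun h => (hne u).lt_of_le (not_lt.1 h)⟩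
  by_cases h : u < σ u <;> simp [tensorInvolution, hσ u, hlt, h]

theorem isRelDecomposition_tensorInvolution {ι κ : Type*} {G : SimpleGraph α}
    {H : SimpleGraph β} {σ : ι → α → α} {π : κ → Equiv.Perm β}
    (hG : IsRelDecomposition G.Adj σ) (hH : IsRelDecomposition H.Adj (fun j => π j)) :
    IsRelDecomposition (tensorProd G H).Adj
      (fun ij : ι × κ => tensorInvolution (σ ij.1) (π ij.2)) := by
  refine ⟨fun ⟨i, j⟩ ⟨u, v⟩ => ⟨hG.1 i u, ?_⟩, fun ⟨u, v⟩ ⟨u', v'⟩ ⟨huu, hvv⟩ => ?_⟩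
  · dsimp only [tensorInvolution]
    split_ifs
    · exact hH.1 j v
    · simpa using (hH.1 j ((π j).symm v)).symm
  · simp only [tensorInvolution_eq_iff]
    obtain ⟨i, hi, hi'⟩ := hG.2 u u' huu
    have hj : ∃! j, if u < u' then π j v = v' else π j v' = v := by
      split_ifs
      · exact hH.2 v v' hvv
      · exact hH.2 v' v hvv.symm
    obtain ⟨j, hj, hj'⟩ := hj
    exact ⟨(i, j), ⟨hi, hj⟩, fun ij h => Prod.ext (hi' _ h.1) (hj' _ h.2)⟩

end TensorProduct

theorem tensorProd_oneFactorable_general {α β : Type*} [Fintype β]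
    (G : SimpleGraph α) (H : SimpleGraph β) (r : ℕ)
    (hG : IsOneFactorable G) (hH : IsRegularGraph H r) :
    IsOneFactorable (tensorProd G H) := by
  obtain ⟨_, -⟩ := exists_wellFoundedLT α
  obtain ⟨n, σ, hσ, hσG⟩ := hG.exists_involutive_decomposition
  obtain ⟨π, hπH⟩ := hH.exists_perm_decomposition
  have hσne : ∀ i u, σ i u ≠ u := fun i u => (hσG.1 i u).ne'
  exact isOneFactorable_of_involutive_decomposition _
    (fun ij : Fin n × Fin r => tensorInvolution_involutive (hσ ij.1) (hσne ij.1) (π ij.2))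
    (isRelDecomposition_tensorInvolution hσG hπH)

/-- If `G` is 1-factorable and `H` is regular, then `G × H` is 1-factorable. -/
theorem tensorProd_oneFactorable {α β : Type*} [Fintype α] [Fintype β]
    (G : SimpleGraph α) (H : SimpleGraph β) (r : ℕ)
    (hG : IsOneFactorable G) (hH : IsRegularGraph H r) :
    IsOneFactorable (tensorProd G H) :=
  tensorProd_oneFactorable_general G H r hG hH
end
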